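/- (Dual one-step descent.) Let Λ ⊆ ℝ^m be nonempty closed convex, let γ > 0, β ∈ {0,1}, υ ≥ 0, and let λ^k, λ* ∈ Λ with ‖λ^k − λ*‖ ≤ D. Let g : ℝ^d → ℝ^m be M-Lipschitz, and let b̄, ȳ* ∈ ℝ^d with ‖b̄ − ȳ*‖ ≤ D. Assume λ* = P_Λ(λ* + γ (g(ȳ*) − υ λ*)). Define λ^{k+1} := P_Λ(λ^k + γ β (g(b̄) − υ λ^k)). Then ‖λ^{k+1} − λ*‖² ≤ ‖λ^k − λ*‖² + C₂ γ² + 2 γ β ⟨λ^k − λ*, (g(b̄) − υ λ^k) − (g(ȳ*) − υ λ*)⟩, where C₂ := 2 D² (M² + 2 υ²). -/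

import Mathlib

open scoped InnerProductSpace

/-!
Both `P_Λ(λ^k + γβ(g(b̄) - υλ^k))` and `λ* = P_Λ(λ* + γ(g(ȳ*) - υλ*))` are nearest points of `Λ`,
and the nearest-point map onto a convex set is nonexpansive. For `β = 1` this bounds
`‖λ^{k+1} - λ*‖²` by `‖(λ^k - λ*) + γ w‖²` with `w = (g(b̄) - υλ^k) - (g(ȳ*) - υλ*)`; expanding the
square gives the inner-product term, and `‖w‖ ≤ (M + |υ|) D` controls `γ²‖w‖²`.
For `β = 0` the iterate is `P_Λ(λ^k) = λ^k`.
-/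

theorem eq_of_forall_norm_sub_le_of_mem {E : Type*} [NormedAddCommGroup E] {K : Set E} {x p : E}
    (hx : x ∈ K) (hmin : ∀ z ∈ K, ‖x - p‖ ≤ ‖x - z‖) : p = x := by
  have h := hmin x hx
  rw [sub_self, norm_zero] at h
  exact (sub_eq_zero.1 (norm_le_zero_iff.1 h)).symm

section NearestPoint

variable {E : Type*} [NormedAddCommGroup E] [InnerProductSpace ℝ E] {K : Set E}

theorem real_inner_sub_nonpos_of_forall_norm_sub_le (hK : Convex ℝ K) {x p : E} (hp : p ∈ K)
    (hmin : ∀ z ∈ K, ‖x - p‖ ≤ ‖x - z‖) {y : E} (hy : y ∈ K) : ⟪x - p, y - p⟫_ℝ ≤ 0 := by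
  have : Nonempty K := ⟨⟨p, hp⟩⟩
  have hinf : ‖x - p‖ = ⨅ z : K, ‖x - z‖ :=
    le_antisymm (le_ciInf fun z => hmin z z.2)
      (ciInf_le ⟨0, Set.forall_mem_range.2 fun _ => norm_nonneg _⟩ (⟨p, hp⟩ : K))
  exact (norm_eq_iInf_iff_real_inner_le_zero hK hp).1 hinf y hy

theorem norm_sub_sq_le_real_inner_of_forall_norm_sub_le (hK : Convex ℝ K) {x y p q : E}
    (hp : p ∈ K) (hq : q ∈ K) (hpmin : ∀ z ∈ K, ‖x - p‖ ≤ ‖x - z‖)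
    (hqmin : ∀ z ∈ K, ‖y - q‖ ≤ ‖y - z‖) : ‖p - q‖ ^ 2 ≤ ⟪x - y, p - q⟫_ℝ := by
  have hp' := real_inner_sub_nonpos_of_forall_norm_sub_le hK hp hpmin hq
  have hq' := real_inner_sub_nonpos_of_forall_norm_sub_le hK hq hqmin hp
  have hswap : ⟪x - p, p - q⟫_ℝ = -⟪x - p, q - p⟫_ℝ := by rw [← inner_neg_right, neg_sub]
  have hsplit : x - y = (x - p) - (y - q) + (p - q) := by abel
  rw [hsplit, inner_add_left, inner_sub_left, real_inner_self_eq_norm_sq]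
  linarith

theorem norm_sub_le_of_forall_norm_sub_le (hK : Convex ℝ K) {x y p q : E}
    (hp : p ∈ K) (hq : q ∈ K) (hpmin : ∀ z ∈ K, ‖x - p‖ ≤ ‖x - z‖)
    (hqmin : ∀ z ∈ K, ‖y - q‖ ≤ ‖y - z‖) : ‖p - q‖ ≤ ‖x - y‖ := by
  have h := (norm_sub_sq_le_real_inner_of_forall_norm_sub_le hK hp hq hpmin hqmin).trans
    (real_inner_le_norm (x - y) (p - q))
  nlinarith [norm_nonneg (p - q), norm_nonneg (x - y)]

end NearestPoint

theorem norm_sq_sub_smul_sub_le {F G : Type*} [SeminormedAddCommGroup F]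
    [SeminormedAddCommGroup G] [NormedSpace ℝ G] {g : F → G} {M : ℝ} (hM : 0 ≤ M)
    (hg : LipschitzWith (Real.toNNReal M) g) {b y : F} {l l' : G} {υ D : ℝ}
    (hby : ‖b - y‖ ≤ D) (hl : ‖l - l'‖ ≤ D) :
    ‖(g b - υ • l) - (g y - υ • l')‖ ^ 2 ≤ 2 * D ^ 2 * (M ^ 2 + υ ^ 2) := by
  have hgD : ‖g b - g y‖ ≤ M * D := by
    simpa [Real.coe_toNNReal M hM] using hg.norm_sub_le_of_le hby
  have hlD : ‖υ • (l - l')‖ ≤ |υ| * D := by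
    rw [norm_smul, Real.norm_eq_abs]
    exact mul_le_mul_of_nonneg_left hl (abs_nonneg υ)
  have hnorm : ‖(g b - υ • l) - (g y - υ • l')‖ ≤ M * D + |υ| * D := by
    rw [show (g b - υ • l) - (g y - υ • l') = (g b - g y) - υ • (l - l') by module]
    exact norm_sub_le_of_le hgD hlD
  calc ‖(g b - υ • l) - (g y - υ • l')‖ ^ 2 ≤ (M * D + |υ| * D) ^ 2 := by gcongr
    _ ≤ 2 * ((M * D) ^ 2 + (|υ| * D) ^ 2) := add_sq_le
    _ = 2 * D ^ 2 * (M ^ 2 + υ ^ 2) := by rw [mul_pow, mul_pow, sq_abs]; ring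

theorem stmt6_general
    (d m : ℕ)
    (Λ : Set (EuclideanSpace ℝ (Fin m)))
    (hΛcv : Convex ℝ Λ)
    (γ : ℝ) (β : ℝ) (hβ : β = 0 ∨ β = 1)
    (υ : ℝ)
    (lk lstar : EuclideanSpace ℝ (Fin m)) (hlk : lk ∈ Λ) (hlstar : lstar ∈ Λ)
    (D : ℝ) (hlD : ‖lk - lstar‖ ≤ D)
    (g : EuclideanSpace ℝ (Fin d) → EuclideanSpace ℝ (Fin m))
    (M : ℝ) (hM : 0 ≤ M) (hg : LipschitzWith (Real.toNNReal M) g)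
    (bbar ybar : EuclideanSpace ℝ (Fin d)) (hby : ‖bbar - ybar‖ ≤ D)
    (proj : EuclideanSpace ℝ (Fin m) → EuclideanSpace ℝ (Fin m))
    (hprojmem : ∀ x, proj x ∈ Λ)
    (hprojmin : ∀ x, ∀ y ∈ Λ, ‖x - proj x‖ ≤ ‖x - y‖)
    (hfix : lstar = proj (lstar + γ • (g ybar - υ • lstar))) :
    ‖proj (lk + (γ * β) • (g bbar - υ • lk)) - lstar‖ ^ 2
      ≤ ‖lk - lstar‖ ^ 2 + 2 * D ^ 2 * (M ^ 2 + 2 * υ ^ 2) * γ ^ 2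
        + 2 * γ * β * ⟪lk - lstar, (g bbar - υ • lk) - (g ybar - υ • lstar)⟫_ℝ := by
  set w := (g bbar - υ • lk) - (g ybar - υ • lstar)
  have hw : ‖w‖ ^ 2 ≤ 2 * D ^ 2 * (M ^ 2 + 2 * υ ^ 2) :=
    (norm_sq_sub_smul_sub_le hM hg hby hlD).trans (by nlinarith [sq_nonneg D, sq_nonneg υ])
  rcases hβ with rfl | rfl
  · rw [mul_zero, zero_smul, add_zero, eq_of_forall_norm_sub_le_of_mem hlk (hprojmin lk)]
    nlinarith [sq_nonneg γ, sq_nonneg D, sq_nonneg M, sq_nonneg υ]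
  · have hstar := hprojmin (lstar + γ • (g ybar - υ • lstar))
    rw [← hfix] at hstar
    have hstep := norm_sub_le_of_forall_norm_sub_le hΛcv (hprojmem _) hlstar
      (hprojmin (lk + (γ * 1) • (g bbar - υ • lk))) hstar
    have hdiff : lk + (γ * 1) • (g bbar - υ • lk) - (lstar + γ • (g ybar - υ • lstar))
        = (lk - lstar) + γ • w := by module
    have hexpand : ‖(lk - lstar) + γ • w‖ ^ 2
        = ‖lk - lstar‖ ^ 2 + 2 * γ * ⟪lk - lstar, w⟫_ℝ + γ ^ 2 * ‖w‖ ^ 2 := by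
      rw [norm_add_sq_real, real_inner_smul_right, norm_smul, mul_pow, Real.norm_eq_abs, sq_abs]
      ring
    rw [hdiff] at hstep
    have hsq := pow_le_pow_left₀ (norm_nonneg _) hstep 2
    nlinarith [mul_le_mul_of_nonneg_left hw (sq_nonneg γ)]

/-- Dual one-step descent of the asynchronous primal-dual algorithm:
with `P_Λ` the nearest-point projection onto the nonempty closed convex set `Λ`,
`λ^{k+1} = P_Λ(λ^k + γ β (g(b̄) - υ λ^k))`, one has
`‖λ^{k+1} - λ*‖² ≤ ‖λ^k - λ*‖² + C₂ γ² + 2γβ⟨λ^k - λ*, (g(b̄) - υλ^k) - (g(ȳ*) - υλ*)⟩`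
with `C₂ = 2D²(M² + 2υ²)`. -/
theorem stmt6
    (d m : ℕ)
    (Λ : Set (EuclideanSpace ℝ (Fin m)))
    (hΛne : Λ.Nonempty) (hΛcl : IsClosed Λ) (hΛcv : Convex ℝ Λ)
    (γ : ℝ) (hγ : 0 < γ) (β : ℝ) (hβ : β = 0 ∨ β = 1)
    (υ : ℝ) (hυ : 0 ≤ υ)
    (lk lstar : EuclideanSpace ℝ (Fin m)) (hlk : lk ∈ Λ) (hlstar : lstar ∈ Λ)
    (D : ℝ) (hlD : ‖lk - lstar‖ ≤ D)
    (g : EuclideanSpace ℝ (Fin d) → EuclideanSpace ℝ (Fin m))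
    (M : ℝ) (hM : 0 ≤ M) (hg : LipschitzWith (Real.toNNReal M) g)
    (bbar ybar : EuclideanSpace ℝ (Fin d)) (hby : ‖bbar - ybar‖ ≤ D)
    (proj : EuclideanSpace ℝ (Fin m) → EuclideanSpace ℝ (Fin m))
    (hprojmem : ∀ x, proj x ∈ Λ)
    (hprojmin : ∀ x, ∀ y ∈ Λ, ‖x - proj x‖ ≤ ‖x - y‖)
    (hfix : lstar = proj (lstar + γ • (g ybar - υ • lstar))) :
    ‖proj (lk + (γ * β) • (g bbar - υ • lk)) - lstar‖ ^ 2
      ≤ ‖lk - lstar‖ ^ 2 + 2 * D ^ 2 * (M ^ 2 + 2 * υ ^ 2) * γ ^ 2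
        + 2 * γ * β * ⟪lk - lstar, (g bbar - υ • lk) - (g ybar - υ • lstar)⟫_ℝ :=
  stmt6_general d m Λ hΛcv γ β hβ υ lk lstar hlk hlstar D hlD g M hM hg bbar ybar hby proj hprojmem
    hprojmin hfix
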